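/- A bounded analytic function f on {z : Re z > 0} that vanishes at all points of an arithmetic progression a + kb (k = 0,1,2,…) with a, b > 0 real vanishes identically on the right half-plane. -/

import Mathlib

open Filter Finset Topology ComplexConjugate Complex Set Function

/-!
Shifting `f` slightly to the left, it becomes analytic on a neighbourhood of the closed right
half-plane, still bounded by `M`, with zeros at `t k = s + k b`, `s > 0`. Dividing out the
Blaschke factors `(z - t k) / (z + t k)`, `k < n`, leaves a function of modulus `≤ M` on the
imaginary axis and bounded far away, hence bounded by `M` on the whole closed
half-plane by Phragmén–Lindelöf. So `|f(x)| ≤ M ∏_{k<n} (t k - x) / (t k + x)` for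
`0 < x < s`, and the product tends to `0` because `∑ 1 / t k` diverges. Thus `f` vanishes on a
real interval, and hence everywhere by the identity theorem.
-/

theorem Real.not_summable_inv_add_mul (a : ℝ) {b : ℝ} (hb : b ≠ 0) :
    ¬Summable fun k : ℕ => (a + k * b)⁻¹ := by
  intro h
  have habs : Summable fun k : ℕ => |b| * |(a + k * b)⁻¹| := h.abs.mul_left |b|
  refine absurd ((Real.summable_one_div_nat_add_rpow (a / b) 1).1 ?_) (lt_irrefl 1)
  refine habs.congr fun k => ?_
  have : a + k * b = (k + a / b) * b := by field_simp; ring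
  rw [this, Real.rpow_one, abs_inv, abs_mul, one_div]
  field_simp

theorem tendsto_prod_range_one_sub_of_not_summable {u : ℕ → ℝ} (hu₀ : ∀ k, 0 ≤ u k)
    (hu₁ : ∀ k, u k ≤ 1) (hu : ¬Summable u) :
    Tendsto (fun n => ∏ k ∈ range n, (1 - u k)) atTop (𝓝 0) := by
  have hsum : Tendsto (fun n => ∑ k ∈ range n, u k) atTop atTop :=
    (not_summable_iff_tendsto_nat_atTop_of_nonneg hu₀).1 hu
  refine squeeze_zero (fun n => prod_nonneg fun k _ => sub_nonneg.2 (hu₁ k)) (fun n => ?_)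
    (Real.tendsto_exp_atBot.comp (tendsto_neg_atTop_atBot.comp hsum))
  calc ∏ k ∈ range n, (1 - u k) ≤ ∏ k ∈ range n, Real.exp (-u k) :=
        prod_le_prod (fun k _ => sub_nonneg.2 (hu₁ k)) fun k _ => Real.one_sub_le_exp_neg _
    _ = Real.exp (-∑ k ∈ range n, u k) := by rw [← sum_neg_distrib, Real.exp_sum]

theorem PhragmenLindelof.right_half_plane_of_bounded_far {E : Type*} [NormedAddCommGroup E]
    [NormedSpace ℂ E] {g : ℂ → E} {B C R : ℝ} (hd : DiffContOnCl ℂ g {z | 0 < z.re})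
    (hfar : ∀ z : ℂ, 0 < z.re → R ≤ ‖z‖ → ‖g z‖ ≤ B) (him : ∀ y : ℝ, ‖g (y * I)‖ ≤ C)
    {z : ℂ} (hz : 0 ≤ z.re) : ‖g z‖ ≤ C := by
  refine PhragmenLindelof.right_half_plane_of_bounded_on_real hd ⟨0, two_pos, 0, ?_⟩ ?_ him hz
  · refine Asymptotics.IsBigO.of_bound B ?_
    filter_upwards [(eventually_cobounded_le_norm R).filter_mono inf_le_left,
      mem_inf_of_right (mem_principal_self _)] with w hR hre
    simpa using hfar w hre hR
  · refine isBoundedUnder_of_eventually_le (a := B) ?_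
    filter_upwards [eventually_ge_atTop (max R 1)] with x hx
    have hx₁ : 1 ≤ x := (le_max_right R 1).trans hx
    refine hfar x (by simp only [ofReal_re]; linarith) ?_
    rw [norm_real, Real.norm_of_nonneg (by linarith)]
    exact (le_max_left R 1).trans hx

noncomputable def blaschkeFactor (t z : ℂ) : ℂ := (z - t) / (z + conj t)

theorem norm_blaschkeFactor_of_re_eq_zero {t z : ℂ} (ht : t.re ≠ 0) (hz : z.re = 0) :
    ‖blaschkeFactor t z‖ = 1 := by
  have hconj : z + conj t = -conj (z - t) := Complex.ext (by simp [hz])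
    (by simp only [add_im, conj_im, map_sub, neg_sub, sub_im, sub_neg_eq_add]; ring)
  have hne : z - t ≠ 0 := fun h => ht (by simpa [hz] using congrArg re (sub_eq_zero.1 h).symm)
  rw [blaschkeFactor, norm_div, hconj, norm_neg, Complex.norm_conj,
    div_self (norm_ne_zero_iff.2 hne)]

theorem one_div_three_le_norm_blaschkeFactor {t z : ℂ} (h : 2 * ‖t‖ < ‖z‖) :
    1 / 3 ≤ ‖blaschkeFactor t z‖ := by
  have hsub : ‖z‖ - ‖t‖ ≤ ‖z - t‖ := norm_sub_norm_le z t
  have hadd : ‖z + conj t‖ ≤ ‖z‖ + ‖t‖ := by simpa using norm_add_le z (conj t)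
  have hpos : 0 < ‖z + conj t‖ := by
    linarith [norm_nonneg t, by simpa using norm_sub_norm_le z (-conj t)]
  rw [blaschkeFactor, norm_div, le_div_iff₀ hpos]
  linarith

theorem norm_blaschkeFactor_ofReal {s x : ℝ} (hx : 0 < x) (hxs : x < s) :
    ‖blaschkeFactor s x‖ = 1 - 2 * x / (s + x) := by
  rw [blaschkeFactor, Complex.conj_ofReal, ← ofReal_sub, ← ofReal_add, norm_div, norm_real,
    norm_real, Real.norm_of_nonpos (by linarith), Real.norm_of_nonneg (by linarith), add_comm x s]
  have : s + x ≠ 0 := by linarith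
  field_simp
  ring

/-- `F z / ∏_{k<n} blaschkeFactor (t k) z`, with `dslope` removing the singularities at the
zeros `t k` of `F`. -/
noncomputable def blaschkeQuotient (F : ℂ → ℂ) (t : ℕ → ℂ) : ℕ → ℂ → ℂ
  | 0 => F
  | n + 1 => fun z => dslope (blaschkeQuotient F t n) (t n) z * (z + conj (t n))

section blaschkeQuotient

variable {F : ℂ → ℂ} {t : ℕ → ℂ}

theorem differentiableOn_blaschkeQuotient {U : Set ℂ} (hU : IsOpen U)
    (hF : DifferentiableOn ℂ F U) (ht : ∀ k, t k ∈ U) (n : ℕ) :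
    DifferentiableOn ℂ (blaschkeQuotient F t n) U := by
  induction n with
  | zero => exact hF
  | succ n ih =>
    exact ((differentiableOn_dslope (hU.mem_nhds (ht n))).2 ih).mul (by fun_prop)

variable (ht : Injective t) (hFt : ∀ k, F (t k) = 0)
include ht hFt

theorem blaschkeQuotient_apply_of_le {n m : ℕ} (h : n ≤ m) :
    blaschkeQuotient F t n (t m) = 0 := by
  induction n generalizing m with
  | zero => exact hFt m
  | succ n ih =>
    simp only [blaschkeQuotient]
    rw [dslope_of_ne _ (ht.ne (by omega : m ≠ n)), slope_def_field, ih (by omega), ih le_rfl,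
      sub_zero, zero_div, zero_mul]

theorem blaschkeQuotient_eq_div_prod {n : ℕ} {z : ℂ} (hz : ∀ k < n, z ≠ t k) :
    blaschkeQuotient F t n z = F z / ∏ k ∈ range n, blaschkeFactor (t k) z := by
  induction n with
  | zero => simp [blaschkeQuotient]
  | succ n ih =>
    simp only [blaschkeQuotient]
    rw [dslope_of_ne _ (hz n n.lt_succ_self), slope_def_field,
      blaschkeQuotient_apply_of_le ht hFt le_rfl, ih fun k hk => hz k (by omega),
      prod_range_succ, blaschkeFactor, mul_div_assoc', div_div_eq_mul_div, sub_zero, div_div,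
      div_mul_eq_mul_div]

variable {M : ℝ} {U : Set ℂ} (hU : IsOpen U) (hUre : {z | 0 ≤ z.re} ⊆ U)
  (hF : DifferentiableOn ℂ F U) (hM : ∀ z, 0 ≤ z.re → ‖F z‖ ≤ M)
  (ht_re : ∀ k, 0 < (t k).re)
include hU hUre hF hM ht_re

theorem norm_blaschkeQuotient_le (n : ℕ) {z : ℂ} (hz : 0 ≤ z.re) :
    ‖blaschkeQuotient F t n z‖ ≤ M := by
  have hM₀ : 0 ≤ M := (norm_nonneg _).trans (hM 0 le_rfl)
  have hd : DiffContOnCl ℂ (blaschkeQuotient F t n) {z | 0 < z.re} :=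
    ((differentiableOn_blaschkeQuotient hU hF (fun k => hUre (ht_re k).le) n).mono
      (by rwa [closure_setOfPred_lt_re])).diffContOnCl
  refine PhragmenLindelof.right_half_plane_of_bounded_far hd (B := M * 3 ^ n)
    (R := 2 * ∑ k ∈ range n, ‖t k‖ + 1) (fun w hw hR => ?_) (fun y => ?_) hz
  · have hfar : ∀ k < n, 2 * ‖t k‖ < ‖w‖ := fun k hk => by
      have := single_le_sum (fun j _ => norm_nonneg (t j)) (mem_range.2 hk)
      linarith
    have hwt : ∀ k < n, w ≠ t k := fun k hk h => by
      have := hfar k hk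
      rw [h] at this
      linarith [norm_nonneg (t k)]
    have hprod : (1 / 3 : ℝ) ^ n ≤ ∏ k ∈ range n, ‖blaschkeFactor (t k) w‖ := by
      simpa using Finset.prod_le_prod (fun _ _ => by norm_num) fun k hk =>
        one_div_three_le_norm_blaschkeFactor (hfar k (mem_range.1 hk))
    rw [blaschkeQuotient_eq_div_prod ht hFt hwt, norm_div, norm_prod]
    calc ‖F w‖ / ∏ k ∈ range n, ‖blaschkeFactor (t k) w‖ ≤ M / (1 / 3) ^ n :=
          div_le_div₀ hM₀ (hM w hw.le) (by positivity) hprod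
      _ = M * 3 ^ n := by rw [one_div, inv_pow, div_inv_eq_mul]
  · have hre : ((y : ℂ) * I).re = 0 := by simp
    have hyt : ∀ k < n, (y : ℂ) * I ≠ t k := fun k _ h => (ht_re k).ne' (h ▸ hre)
    rw [blaschkeQuotient_eq_div_prod ht hFt hyt, norm_div, norm_prod,
      prod_eq_one fun k _ => norm_blaschkeFactor_of_re_eq_zero (ht_re k).ne' hre, div_one]
    exact hM _ hre.ge

theorem eq_zero_of_tendsto_prod_norm_blaschkeFactor {z : ℂ} (hz : 0 ≤ z.re)
    (hlim : Tendsto (fun n => ∏ k ∈ range n, ‖blaschkeFactor (t k) z‖) atTop (𝓝 0)) :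
    F z = 0 := by
  by_cases hzt : ∃ k, z = t k
  · obtain ⟨k, rfl⟩ := hzt
    exact hFt k
  simp only [not_exists] at hzt
  have hB : ∀ k, blaschkeFactor (t k) z ≠ 0 := fun k => by
    refine div_ne_zero (sub_ne_zero.2 (hzt k)) fun h => ?_
    have := congrArg re h
    simp only [add_re, conj_re, zero_re] at this
    linarith [ht_re k]
  have hbound : ∀ n, ‖F z‖ ≤ M * ∏ k ∈ range n, ‖blaschkeFactor (t k) z‖ := fun n => by
    rw [← eq_div_iff (prod_ne_zero_iff.2 fun k _ => hB k) |>.1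
        (blaschkeQuotient_eq_div_prod ht hFt fun k _ => hzt k), norm_mul, norm_prod]
    exact mul_le_mul_of_nonneg_right
      (norm_blaschkeQuotient_le ht hFt hU hUre hF hM ht_re n hz)
      (prod_nonneg fun _ _ => norm_nonneg _)
  have : ‖F z‖ ≤ 0 := ge_of_tendsto' (by simpa using hlim.const_mul M) hbound
  exact norm_le_zero_iff.1 this

end blaschkeQuotient

theorem tendsto_prod_norm_blaschkeFactor_arithProg {s b x : ℝ} (hb : 0 < b) (hx : 0 < x)
    (hxs : x < s) :
    Tendsto (fun n => ∏ k ∈ range n, ‖blaschkeFactor ((s + k * b : ℝ) : ℂ) x‖)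
      atTop (𝓝 0) := by
  have hsk : ∀ k : ℕ, x < s + k * b := fun k =>
    hxs.trans_le (le_add_of_nonneg_right (by positivity))
  simp_rw [norm_blaschkeFactor_ofReal hx (hsk _)]
  refine tendsto_prod_range_one_sub_of_not_summable (fun k => ?_) (fun k => ?_) fun h => ?_
  · exact div_nonneg (by linarith) (by linarith [hsk k])
  · rw [div_le_one (by linarith [hsk k])]
    linarith [hsk k]
  · refine Real.not_summable_inv_add_mul (s + x) hb.ne'
      ((h.mul_left (2 * x)⁻¹).congr fun k => ?_)
    have := hsk k
    field_simp
    ring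

theorem DifferentiableOn.eqOn_zero_of_eq_zero_on_Ioo {f : ℂ → ℂ} {U : Set ℂ} (hU : IsOpen U)
    (hUc : IsPreconnected U) (hf : DifferentiableOn ℂ f U) {p q : ℝ} (hp : (p : ℂ) ∈ U)
    (hpq : p < q) (h0 : ∀ x ∈ Ioo p q, f x = 0) : EqOn f 0 U := by
  refine (hf.analyticOnNhd hU).eqOn_zero_of_preconnected_of_frequently_eq_zero hUc hp ?_
  have hmaps : Tendsto ((↑) : ℝ → ℂ) (𝓝[>] p) (𝓝[≠] (p : ℂ)) :=
    continuous_ofReal.continuousWithinAt.tendsto_nhdsWithin fun x hx => by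
      simpa using (show p < x from hx).ne'
  exact hmaps.frequently (eventually_of_mem (Ioo_mem_nhdsGT hpq) h0).frequently

/-- A bounded analytic function on the open right half-plane vanishing at all points of an
arithmetic progression `a + k·b` (`k = 0,1,2,…`) with `a, b > 0` vanishes identically. -/
theorem vanish_of_arithmetic_progression (f : ℂ → ℂ)
    (hf : DifferentiableOn ℂ f {z : ℂ | 0 < z.re})
    (hbd : ∃ M : ℝ, ∀ z : ℂ, 0 < z.re → ‖f z‖ ≤ M)
    (a b : ℝ) (ha : 0 < a) (hb : 0 < b)
    (hzero : ∀ k : ℕ, f ((a : ℂ) + (k : ℂ) * (b : ℂ)) = 0) :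
    ∀ z : ℂ, 0 < z.re → f z = 0 := by
  obtain ⟨M, hM⟩ := hbd
  -- after the shift `z ↦ z + c`, `f` is analytic on a neighbourhood of the closed half-plane
  obtain ⟨c, hc, hca⟩ : ∃ c, 0 < c ∧ c < a := ⟨a / 2, by positivity, by linarith⟩
  set t : ℕ → ℂ := fun k => ((a - c + k * b : ℝ) : ℂ)
  have ht : Injective t := fun m n h => by simpa [t, hb.ne'] using h
  have ht_re : ∀ k, 0 < (t k).re := fun k => by simp only [t, ofReal_re]; positivity
  have hFt : ∀ k, f (t k + c) = 0 := fun k => by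
    rw [← hzero k]
    push_cast [t]
    ring_nf
  have hU : IsOpen {z : ℂ | -c < z.re} := isOpen_lt continuous_const continuous_re
  have hUre : {z : ℂ | 0 ≤ z.re} ⊆ {z | -c < z.re} := fun z (hz : 0 ≤ z.re) =>
    show -c < z.re by linarith
  have hF : DifferentiableOn ℂ (fun z => f (z + c)) {z | -c < z.re} :=
    hf.comp (by fun_prop) fun z (hz : -c < z.re) => show 0 < (z + c).re by
      rw [add_re, ofReal_re]; linarith
  have hFM : ∀ z : ℂ, 0 ≤ z.re → ‖f (z + c)‖ ≤ M := fun z hz =>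
    hM _ (by rw [add_re, ofReal_re]; linarith)
  have hvanish : ∀ y ∈ Ioo c a, f y = 0 := by
    rintro y ⟨hcy, hya⟩
    have hy : 0 ≤ ((y - c : ℝ) : ℂ).re := by rw [ofReal_re]; linarith
    simpa using eq_zero_of_tendsto_prod_norm_blaschkeFactor ht hFt hU hUre hF hFM ht_re hy
      (tendsto_prod_norm_blaschkeFactor_arithProg hb (by linarith) (by linarith))
  exact fun z hz => hf.eqOn_zero_of_eq_zero_on_Ioo (isOpen_lt continuous_const continuous_re)
    (convex_halfSpace_re_gt 0).isPreconnected (by simpa using hc) hca hvanish hz
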